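/- arXiv:2108.04882 — 3 statements merged into one kernel-verified Lean document; each statement's English description precedes it below -/
import Mathlib

section
/- Let F be a field. Then the Lie algebra MJ(F) of Jacobi matrices, with bracket [a,b] = ab − ba, is perfect: every matrix in MJ(F) is a finite sum of commutators [a,b] with a,b ∈ MJ(F), i.e. MJ(F) = [MJ(F), MJ(F)]. -/
/-- The product of two `ℤ × ℤ` matrices, defined via `finsum`; it is well defined on
Jacobi matrices. -/
noncomputable def matMul {F : Type*} [Field F] (a b : Matrix ℤ ℤ F) : Matrix ℤ ℤ F :=
  fun i j => ∑ᶠ k, a i k * b k j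

/-- A Jacobi matrix: a `ℤ × ℤ` matrix having finitely many nonzero diagonals, i.e.
there is `n : ℕ` with `a i j = 0` whenever `|i - j| > n`. -/
def IsJacobi {F : Type*} [Field F] (a : Matrix ℤ ℤ F) : Prop :=
  ∃ n : ℕ, ∀ i j : ℤ, (n : ℤ) < |i - j| → a i j = 0

/-- "Antiderivative" of `a` along the diagonal `d`. -/
noncomputable def Gfun {F : Type*} [Field F] (a : Matrix ℤ ℤ F) (d i : ℤ) : F :=
  (Finset.Ico 0 i).sum (fun k => a k (k + d)) - (Finset.Ico i 0).sum (fun k => a k (k + d))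

lemma Gfun_step {F : Type*} [Field F] (a : Matrix ℤ ℤ F) (d i : ℤ) :
    Gfun a d (i + 1) - Gfun a d i = a i (i + d) := by
  unfold Gfun
  rcases le_or_gt 0 i with h | h
  · have hsplit : Finset.Ico (0:ℤ) (i + 1) = insert i (Finset.Ico 0 i) := by
      ext x; simp [Finset.mem_Ico]; omega
    rw [hsplit, Finset.sum_insert (by simp [Finset.mem_Ico]),
      Finset.Ico_eq_empty (by omega : ¬ (i + 1 < 0)),
      Finset.Ico_eq_empty (by omega : ¬ (i < 0))]
    simp
  · have hsplit : Finset.Ico i (0:ℤ) = insert i (Finset.Ico (i + 1) 0) := by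
      ext x; simp [Finset.mem_Ico]; omega
    rw [hsplit, Finset.sum_insert (by simp [Finset.mem_Ico]),
      Finset.Ico_eq_empty (by omega : ¬ ((0:ℤ) < i)),
      Finset.Ico_eq_empty (by omega : ¬ ((0:ℤ) < i + 1))]
    simp

/-- For a field `F`, the Lie algebra `MJ(F)` of Jacobi matrices is perfect:
every Jacobi matrix is a finite sum of commutators `ab - ba` of Jacobi matrices. -/
theorem stmt_2 (F : Type*) [Field F] :
    ∀ a : Matrix ℤ ℤ F, IsJacobi a →
      a ∈ AddSubgroup.closure
        {x : Matrix ℤ ℤ F | ∃ b c : Matrix ℤ ℤ F,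
          IsJacobi b ∧ IsJacobi c ∧ x = matMul b c - matMul c b} := by
  rintro a ⟨n, hn⟩
  apply AddSubgroup.subset_closure
  set U : Matrix ℤ ℤ F := fun i j => if j = i + 1 then 1 else 0 with hU
  set b : Matrix ℤ ℤ F := fun i j => Gfun a (j - i + 1) i with hb
  refine ⟨U, b, ⟨1, ?_⟩, ⟨n + 1, ?_⟩, ?_⟩
  · intro i j hij
    simp only [Nat.cast_one] at hij
    have : j ≠ i + 1 := by
      rcases abs_cases (i - j) with ⟨h1, _⟩ | ⟨h1, _⟩ <;> omega
    simp [hU, this]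
  · intro i j hij
    have hzero : ∀ k : ℤ, a k (k + (j - i + 1)) = 0 := by
      intro k
      apply hn
      rw [abs_sub_comm]
      have : k + (j - i + 1) - k = j - i + 1 := by ring
      rw [this]
      rcases abs_cases (i - j) with ⟨h1, h2⟩ | ⟨h1, h2⟩ <;> rcases abs_cases (j - i + 1) with ⟨h3, h4⟩ | ⟨h3, h4⟩ <;> omega
    simp [hb, Gfun, hzero]
  · funext i j
    have hUb : matMul U b i j = b (i + 1) j := by
      unfold matMul
      rw [finsum_eq_single _ (i + 1) (by
        intro x hx
        simp [hU, hx])]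
      simp [hU]
    have hbU : matMul b U i j = b i (j - 1) := by
      unfold matMul
      rw [finsum_eq_single _ (j - 1) (by
        intro x hx
        have : j ≠ x + 1 := by omega
        simp [hU, this])]
      simp [hU]
    simp only [Matrix.sub_apply, hUb, hbU]
    have key : b (i + 1) j - b i (j - 1) = a i (i + (j - i)) := by
      have e1 : j - (i + 1) + 1 = j - i := by ring
      have e2 : (j - 1) - i + 1 = j - i := by ring
      rw [hb]
      simp only [e1, e2]
      exact Gfun_step a (j - i) i
    rw [key]
    congr 1
    ring
end

section
/- Let F be a field. Then every derivation of the algebra MJ(F) of Jacobi matrices is inner: for every derivation d of MJ(F) there exists y ∈ MJ(F) such that d(a) = ya − ay for all a ∈ MJ(F). -/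
section Aux

variable {F : Type*} [Field F]

/-- Matrix unit. -/
def eMat (i j : ℤ) : Matrix ℤ ℤ F := fun p q => if p = i ∧ q = j then 1 else 0

lemma matMul_apply (a b : Matrix ℤ ℤ F) (i j : ℤ) :
    matMul a b i j = ∑ᶠ k, a i k * b k j := rfl

lemma eMat_jacobi (i j : ℤ) : IsJacobi (eMat i j : Matrix ℤ ℤ F) := by
  refine ⟨(i - j).natAbs, fun p q h => ?_⟩
  show (if p = i ∧ q = j then (1:F) else 0) = 0
  rw [if_neg]
  rintro ⟨rfl, rfl⟩
  rw [Int.abs_eq_natAbs] at h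
  exact lt_irrefl _ h

lemma mm_eMat_right_apply (x : Matrix ℤ ℤ F) (j l p q : ℤ) :
    matMul x (eMat j l) p q = if q = l then x p j else 0 := by
  show (∑ᶠ k, x p k * eMat j l k q) = _
  by_cases hq : q = l
  · subst hq
    rw [if_pos rfl, finsum_eq_single _ j]
    · show x p j * (if (j = j ∧ q = q) then (1:F) else 0) = x p j
      rw [if_pos ⟨rfl, rfl⟩, mul_one]
    · intro t ht
      show x p t * (if (t = j ∧ q = q) then (1:F) else 0) = 0
      rw [if_neg (by tauto), mul_zero]
  · rw [if_neg hq]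
    have h0 : ∀ k : ℤ, x p k * eMat j l k q = 0 := by
      intro k
      show x p k * (if (k = j ∧ q = l) then (1:F) else 0) = 0
      rw [if_neg (by tauto), mul_zero]
    rw [finsum_congr h0]
    exact finsum_zero

lemma mm_eMat_left_apply (x : Matrix ℤ ℤ F) (i k p q : ℤ) :
    matMul (eMat i k) x p q = if p = i then x k q else 0 := by
  show (∑ᶠ t, eMat i k p t * x t q) = _
  by_cases hp : p = i
  · subst hp
    rw [if_pos rfl, finsum_eq_single _ k]
    · show (if (p = p ∧ k = k) then (1:F) else 0) * x k q = x k q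
      rw [if_pos ⟨rfl, rfl⟩, one_mul]
    · intro t ht
      show (if (p = p ∧ t = k) then (1:F) else 0) * x t q = 0
      rw [if_neg (by tauto), zero_mul]
  · rw [if_neg hp]
    have h0 : ∀ t : ℤ, eMat i k p t * x t q = 0 := by
      intro t
      show (if (p = i ∧ t = k) then (1:F) else 0) * x t q = 0
      rw [if_neg (by tauto), zero_mul]
    rw [finsum_congr h0]
    exact finsum_zero

lemma col_fin (a : Matrix ℤ ℤ F) {n : ℕ} (ha : ∀ i j : ℤ, (n : ℤ) < |i - j| → a i j = 0)
    (j : ℤ) (u : ℤ → F) : (Function.support fun t => u t * a t j).Finite := by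
  apply Set.Finite.subset (Set.finite_Icc (j - n) (j + n))
  intro t ht
  simp only [Function.mem_support] at ht
  simp only [Set.mem_Icc]
  by_contra hc
  apply ht
  have h1 : (n : ℤ) < |t - j| := by
    rw [Int.abs_eq_natAbs]
    omega
  rw [ha t j h1, mul_zero]

lemma row_fin (a : Matrix ℤ ℤ F) {n : ℕ} (ha : ∀ i j : ℤ, (n : ℤ) < |i - j| → a i j = 0)
    (i : ℤ) (v : ℤ → F) : (Function.support fun t => a i t * v t).Finite := by
  apply Set.Finite.subset (Set.finite_Icc (i - n) (i + n))
  intro t ht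
  simp only [Function.mem_support] at ht
  simp only [Set.mem_Icc]
  by_contra hc
  apply ht
  have h1 : (n : ℤ) < |i - t| := by
    rw [Int.abs_eq_natAbs]
    omega
  rw [ha i t h1, zero_mul]

/-- Auxiliary recursive bound sequence used for the uniform-band argument. -/
def bSeq (N : ℤ → ℕ) (I0 J0 : ℕ → ℤ) : ℕ → ℕ
  | 0 => 0
  | k + 1 =>
      max (max (bSeq N I0 J0 k + 1) (k + 1))
        (max (N (I0 (bSeq N I0 J0 k))) (N (J0 (bSeq N I0 J0 k))))

lemma bSeq_strictMono (N : ℤ → ℕ) (I0 J0 : ℕ → ℤ) : StrictMono (bSeq N I0 J0) := by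
  apply strictMono_nat_of_lt_succ
  intro k
  simp only [bSeq]
  omega

lemma le_bSeq (N : ℤ → ℕ) (I0 J0 : ℕ → ℤ) : ∀ k, k ≤ bSeq N I0 J0 k
  | 0 => le_refl 0
  | k + 1 => by simp only [bSeq]; omega

lemma NI_le_bSeq (N : ℤ → ℕ) (I0 J0 : ℕ → ℤ) (k : ℕ) :
    N (I0 (bSeq N I0 J0 k)) ≤ bSeq N I0 J0 (k + 1) := by
  simp only [bSeq]; omega

lemma NJ_le_bSeq (N : ℤ → ℕ) (I0 J0 : ℕ → ℤ) (k : ℕ) :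
    N (J0 (bSeq N I0 J0 k)) ≤ bSeq N I0 J0 (k + 1) := by
  simp only [bSeq]; omega

end Aux

/-- Every derivation of the algebra `MJ(F)` of Jacobi matrices is inner:
there is a Jacobi matrix `y` with `d(a) = y*a - a*y` for all Jacobi matrices `a`. -/
theorem stmt_7 (F : Type*) [Field F]
    (d : Matrix ℤ ℤ F → Matrix ℤ ℤ F)
    (hmap : ∀ a, IsJacobi a → IsJacobi (d a))
    (hadd : ∀ a b, IsJacobi a → IsJacobi b → d (a + b) = d a + d b)
    (hsmul : ∀ (c : F) (a), IsJacobi a → d (c • a) = c • d a)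
    (hmul : ∀ a b, IsJacobi a → IsJacobi b →
      d (matMul a b) = matMul (d a) b + matMul a (d b)) :
    ∃ y : Matrix ℤ ℤ F, IsJacobi y ∧
      ∀ a, IsJacobi a → d a = matMul y a - matMul a y := by
  classical
  have h0J : IsJacobi (0 : Matrix ℤ ℤ F) := ⟨0, fun _ _ _ => rfl⟩
  have hd0 : d 0 = 0 := by
    have h := hadd 0 0 h0J h0J
    rw [add_zero] at h
    exact (left_eq_add.mp h)
  -- L4 : diagonal entries of d of diagonal matrix units vanish
  have hL4 : ∀ i : ℤ, d (eMat i i) i i = 0 := by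
    intro i
    have e2 : matMul (eMat i i) (eMat i i) = (eMat i i : Matrix ℤ ℤ F) := by
      funext p q
      rw [mm_eMat_left_apply]
      show _ = (if p = i ∧ q = i then (1:F) else 0)
      by_cases hp : p = i
      · rw [if_pos hp]
        show (if (i = i ∧ q = i) then (1:F) else 0) = _
        by_cases hq : q = i
        · rw [if_pos ⟨rfl, hq⟩, if_pos ⟨hp, hq⟩]
        · rw [if_neg (by tauto), if_neg (by tauto)]
      · rw [if_neg hp, if_neg (by tauto)]
    have h := hmul _ _ (eMat_jacobi i i) (eMat_jacobi i i)
    rw [e2] at h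
    have h2 := congrFun (congrFun h i) i
    rw [Matrix.add_apply, mm_eMat_right_apply, mm_eMat_left_apply, if_pos rfl] at h2
    exact left_eq_add.mp h2
  -- L5 : off-diagonal symmetry
  have hL5 : ∀ i k : ℤ, i ≠ k → d (eMat k k) i k = -(d (eMat i i) i k) := by
    intro i k hik
    have e0 : matMul (eMat i i) (eMat k k) = (0 : Matrix ℤ ℤ F) := by
      funext p q
      rw [mm_eMat_left_apply]
      show _ = (0:F)
      by_cases hp : p = i
      · rw [if_pos hp]
        show (if (i = k ∧ q = k) then (1:F) else 0) = 0
        rw [if_neg (by tauto)]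
      · rw [if_neg hp]
    have h := hmul _ _ (eMat_jacobi i i) (eMat_jacobi k k)
    rw [e0, hd0] at h
    have h2 := congrFun (congrFun h i) k
    rw [Matrix.zero_apply, Matrix.add_apply, mm_eMat_right_apply, mm_eMat_left_apply,
      if_pos rfl, if_pos rfl] at h2
    linear_combination -h2
  -- L6 : cocycle identity
  have hL6 : ∀ i j : ℤ, d (eMat i j) i j = d (eMat 0 j) 0 j - d (eMat 0 i) 0 i := by
    intro i j
    have e3 : matMul (eMat 0 i) (eMat i j) = (eMat 0 j : Matrix ℤ ℤ F) := by
      funext p q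
      rw [mm_eMat_left_apply]
      show _ = (if p = 0 ∧ q = j then (1:F) else 0)
      by_cases hp : p = (0:ℤ)
      · rw [if_pos hp]
        show (if (i = i ∧ q = j) then (1:F) else 0) = _
        by_cases hq : q = j
        · rw [if_pos ⟨rfl, hq⟩, if_pos ⟨hp, hq⟩]
        · rw [if_neg (by tauto), if_neg (by tauto)]
      · rw [if_neg hp, if_neg (by tauto)]
    have h := hmul _ _ (eMat_jacobi 0 i) (eMat_jacobi i j)
    rw [e3] at h
    have h2 := congrFun (congrFun h (0:ℤ)) j
    rw [Matrix.add_apply, mm_eMat_right_apply, mm_eMat_left_apply, if_pos rfl, if_pos rfl] at h2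
    linear_combination -h2
  -- L7 : uniform band bound for the off-diagonal entries
  have hL7 : ∃ n : ℕ, ∀ i j : ℤ, (n : ℤ) < |i - j| → d (eMat j j) i j = 0 := by
    by_contra hcon
    push_neg at hcon
    choose I0 J0 hgt hne using hcon
    choose N hN using fun t : ℤ => hmap (eMat t t) (eMat_jacobi t t)
    have hne' : ∀ m : ℕ, I0 m ≠ J0 m := by
      intro m h
      have h1 := hgt m
      rw [h, sub_self, abs_zero] at h1
      omega
    have hbJ : ∀ m : ℕ, |I0 m - J0 m| ≤ (N (J0 m) : ℤ) := by
      intro m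
      by_contra hb
      push_neg at hb
      exact hne m (hN (J0 m) _ _ hb)
    have hbI : ∀ m : ℕ, |I0 m - J0 m| ≤ (N (I0 m) : ℤ) := by
      intro m
      by_contra hb
      push_neg at hb
      have h5 := hL5 (I0 m) (J0 m) (hne' m)
      rw [hN (I0 m) (I0 m) (J0 m) hb, neg_zero] at h5
      exact hne m h5
    set b := bSeq N I0 J0 with hbdef
    have hmono : StrictMono b := bSeq_strictMono N I0 J0
    have hlek : ∀ k, k ≤ b k := le_bSeq N I0 J0
    have hNI : ∀ k, N (I0 (b k)) ≤ b (k + 1) := NI_le_bSeq N I0 J0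
    have hNJ : ∀ k, N (J0 (b k)) ≤ b (k + 1) := NJ_le_bSeq N I0 J0
    -- no row index equals any column index
    have hIJ : ∀ k l : ℕ, I0 (b k) ≠ J0 (b l) := by
      intro k l h
      rcases lt_trichotomy k l with hkl | rfl | hlk
      · have h1 : (N (J0 (b l)) : ℤ) ≤ (b l : ℤ) := by
          rw [← h]
          exact_mod_cast (hNI k).trans (hmono.monotone (Nat.succ_le_of_lt hkl))
        exact absurd ((hbJ (b l)).trans h1) (not_le.mpr (hgt (b l)))
      · exact hne' (b k) h
      · have h1 : (N (I0 (b k)) : ℤ) ≤ (b k : ℤ) := by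
          rw [h]
          exact_mod_cast (hNJ l).trans (hmono.monotone (Nat.succ_le_of_lt hlk))
        exact absurd ((hbI (b k)).trans h1) (not_le.mpr (hgt (b k)))
    -- the diagonal idempotent supported on the chosen columns
    set p : Matrix ℤ ℤ F :=
      (fun s t => if s = t ∧ ∃ k : ℕ, t = J0 (b k) then 1 else 0) with hp
    have hpJ : IsJacobi p := by
      refine ⟨0, fun s t h => ?_⟩
      show (if s = t ∧ ∃ k : ℕ, t = J0 (b k) then (1:F) else 0) = 0
      rw [if_neg]
      rintro ⟨rfl, -⟩
      rw [sub_self, abs_zero] at h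
      omega
    obtain ⟨M, hM⟩ := hmap p hpJ
    have hfinal : ∀ k : ℕ,
        d p (I0 (b k)) (J0 (b k)) = d (eMat (J0 (b k)) (J0 (b k))) (I0 (b k)) (J0 (b k)) := by
      intro k
      have e4 : matMul p (eMat (J0 (b k)) (J0 (b k))) = (eMat (J0 (b k)) (J0 (b k)) : Matrix ℤ ℤ F) := by
        funext s t
        rw [mm_eMat_right_apply]
        show _ = (if s = J0 (b k) ∧ t = J0 (b k) then (1:F) else 0)
        by_cases ht : t = J0 (b k)
        · rw [if_pos ht]
          show (if s = J0 (b k) ∧ ∃ k' : ℕ, J0 (b k) = J0 (b k') then (1:F) else 0) = _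
          by_cases hs : s = J0 (b k)
          · rw [if_pos ⟨hs, ⟨k, rfl⟩⟩, if_pos ⟨hs, ht⟩]
          · rw [if_neg (by tauto), if_neg (by tauto)]
        · rw [if_neg ht, if_neg (by tauto)]
      have h := hmul p (eMat (J0 (b k)) (J0 (b k))) hpJ (eMat_jacobi _ _)
      rw [e4] at h
      have h2 := congrFun (congrFun h (I0 (b k))) (J0 (b k))
      rw [Matrix.add_apply, mm_eMat_right_apply, if_pos rfl] at h2
      have hz : matMul p (d (eMat (J0 (b k)) (J0 (b k)))) (I0 (b k)) (J0 (b k)) = 0 := by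
        show (∑ᶠ t, p (I0 (b k)) t * d (eMat (J0 (b k)) (J0 (b k))) t (J0 (b k))) = 0
        have h0 : ∀ t : ℤ, p (I0 (b k)) t * d (eMat (J0 (b k)) (J0 (b k))) t (J0 (b k)) = 0 := by
          intro t
          have hpz : p (I0 (b k)) t = 0 := by
            show (if I0 (b k) = t ∧ ∃ k' : ℕ, t = J0 (b k') then (1:F) else 0) = 0
            rw [if_neg]
            rintro ⟨rfl, k', hk'⟩
            exact hIJ k k' hk'
          rw [hpz, zero_mul]
        rw [finsum_congr h0]
        exact finsum_zero
      rw [hz, add_zero] at h2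
      exact h2.symm
    have hMb : (M : ℤ) < |I0 (b M) - J0 (b M)| := by
      have := hgt (b M)
      have h2 : (M : ℤ) ≤ (b M : ℤ) := by exact_mod_cast hlek M
      omega
    have := hM _ _ hMb
    rw [hfinal M] at this
    exact hne (b M) this
  obtain ⟨ny, hny⟩ := hL7
  -- the inner matrix
  set y : Matrix ℤ ℤ F :=
    (fun pp qq => if pp = qq then -(d (eMat 0 pp) 0 pp) else d (eMat qq qq) pp qq) with hy
  refine ⟨y, ⟨ny, ?_⟩, ?_⟩
  · intro i j h
    have hij : i ≠ j := by
      rintro rfl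
      rw [sub_self, abs_zero] at h
      omega
    show (if i = j then -(d (eMat 0 i) 0 i) else d (eMat j j) i j) = 0
    rw [if_neg hij]
    exact hny i j h
  · intro a haJ
    obtain ⟨n, ha⟩ := haJ
    funext i j
    -- the key derivation identity at entry (i, j)
    have hEaJ : IsJacobi (matMul a (eMat j j)) := by
      refine ⟨n, fun p q h => ?_⟩
      rw [mm_eMat_right_apply]
      by_cases hq : q = j
      · subst hq
        rw [if_pos rfl]
        exact ha p q h
      · rw [if_neg hq]
    have hsm : matMul (eMat i i) (matMul a (eMat j j)) = a i j • (eMat i j : Matrix ℤ ℤ F) := by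
      funext s t
      rw [mm_eMat_left_apply]
      show _ = a i j * (if s = i ∧ t = j then (1:F) else 0)
      by_cases hs : s = i
      · rw [if_pos hs, mm_eMat_right_apply]
        by_cases ht : t = j
        · rw [if_pos ht, if_pos ⟨hs, ht⟩, mul_one]
        · rw [if_neg ht, if_neg (by tauto), mul_zero]
      · rw [if_neg hs, if_neg (by tauto), mul_zero]
    have key := hmul (eMat i i) (matMul a (eMat j j)) (eMat_jacobi i i) hEaJ
    rw [hsm, hsmul (a i j) (eMat i j) (eMat_jacobi i j),
      hmul a (eMat j j) ⟨n, ha⟩ (eMat_jacobi j j)] at key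
    have keyij := congrFun (congrFun key i) j
    rw [Matrix.smul_apply, smul_eq_mul] at keyij
    have hX : matMul (d (eMat i i)) (matMul a (eMat j j)) i j
        = ∑ᶠ t, d (eMat i i) i t * a t j := by
      show (∑ᶠ t, d (eMat i i) i t * matMul a (eMat j j) t j) = _
      apply finsum_congr
      intro t
      rw [mm_eMat_right_apply, if_pos rfl]
    have hY : matMul (eMat i i) (matMul (d a) (eMat j j) + matMul a (d (eMat j j))) i j
        = d a i j + ∑ᶠ t, a i t * d (eMat j j) t j := by
      rw [mm_eMat_left_apply, if_pos rfl, Matrix.add_apply, mm_eMat_right_apply, if_pos rfl,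
        matMul_apply]
    rw [Matrix.add_apply, hX, hY] at keyij
    rw [hL6 i j] at keyij
    -- now compute the two sides of the commutator
    rw [Matrix.sub_apply]
    have hT1 : matMul y a i j
        = -(∑ᶠ t, d (eMat i i) i t * a t j) + -(d (eMat 0 i) 0 i) * a i j := by
      rw [matMul_apply]
      have hsplit : ∀ t : ℤ, y i t * a t j
          = (-(d (eMat i i) i t)) * a t j + (if t = i then -(d (eMat 0 i) 0 i) else 0) * a t j := by
        intro t
        by_cases hti : t = i
        · subst hti
          show (if t = t then -(d (eMat 0 t) 0 t) else d (eMat t t) t t) * a t j = _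
          rw [if_pos rfl, if_pos rfl, hL4 t]
          ring
        · show (if i = t then -(d (eMat 0 i) 0 i) else d (eMat t t) i t) * a t j = _
          rw [if_neg (fun hh => hti hh.symm), if_neg hti,
            hL5 i t (fun hh => hti hh.symm)]
          ring
      rw [finsum_congr hsplit,
        finsum_add_distrib (col_fin a ha j _) (col_fin a ha j _)]
      congr 1
      · have hneg : ∀ t : ℤ, (-(d (eMat i i) i t)) * a t j = -(d (eMat i i) i t * a t j) := by
          intro t; ring
        rw [finsum_congr hneg, finsum_neg_distrib]
      · rw [finsum_eq_single _ i]
        · rw [if_pos rfl]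
        · intro t ht
          rw [if_neg ht, zero_mul]
    have hT2 : matMul a y i j
        = (∑ᶠ t, a i t * d (eMat j j) t j) + a i j * -(d (eMat 0 j) 0 j) := by
      rw [matMul_apply]
      have hsplit : ∀ t : ℤ, a i t * y t j
          = a i t * d (eMat j j) t j + a i t * (if t = j then -(d (eMat 0 j) 0 j) else 0) := by
        intro t
        by_cases htj : t = j
        · subst htj
          show a i t * (if t = t then -(d (eMat 0 t) 0 t) else d (eMat t t) t t) = _
          rw [if_pos rfl, if_pos rfl, hL4 t]
          ring
        · show a i t * (if t = j then -(d (eMat 0 t) 0 t) else d (eMat j j) t j) = _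
          rw [if_neg htj, if_neg htj]
          ring
      rw [finsum_congr hsplit,
        finsum_add_distrib (row_fin a ha i _) (row_fin a ha i _)]
      congr 1
      rw [finsum_eq_single _ j]
      · rw [if_pos rfl]
      · intro t ht
        rw [if_neg ht, mul_zero]
    rw [hT1, hT2]
    linear_combination -keyij
end

section
/- Let F be a field with char F ≠ 2. Then every derivation of the Lie algebra gl_J(F) of Jacobi matrices is inner: for every Lie algebra derivation d there exists y ∈ MJ(F) such that d(a) = ya − ay for all a ∈ MJ(F). -/
/-!
Products `matMul y a` with one Jacobi factor are finite sums, and associativity holds as soon as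
two of the three factors are Jacobi matrices, so `bracket y` is a derivation for every
`ℤ × ℤ` matrix `y`. Subtracting such inner derivations from `d`, first to make the images of the
diagonal matrix units `E i i = single i i 1` diagonal and then, via a diagonal `y` and the cocycle
relations among the `d (E k l) k l`, to kill all off-diagonal matrix units, leaves a derivation `D`
vanishing on every `E k l` with `k ≠ l`. Bracketing twice with `E j i` isolates `2 (D a) i j`, and
bracketing with `E i j` compares `(D a) i i` with `(D a) j j`; so `D a` is scalar and `D` kills all
commutators. Every Jacobi matrix is a finite sum of commutators, one for each of its diagonals,
hence `D = 0`. Finally `y` is a Jacobi matrix because `[y, S]` and `[y, P]` are, for the shift `S`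
and the projection `P` onto the coordinates `i ≥ 0`.
-/

open Matrix Finset Function

namespace JacobiMatrix

variable {F : Type*} [Field F]

theorem finsum_comm_of_support_subset {α β M : Type*} [AddCommMonoid M] (g : α → β → M)
    (s : Finset α) (t : Finset β) (h : ∀ a b, g a b ≠ 0 → a ∈ s ∧ b ∈ t) :
    ∑ᶠ a, ∑ᶠ b, g a b = ∑ᶠ b, ∑ᶠ a, g a b := by
  have row (a : α) : ∑ᶠ b, g a b = ∑ b ∈ t, g a b :=
    finsum_eq_sum_of_support_subset _ fun b hb => (h a b hb).2
  have col (b : β) : ∑ᶠ a, g a b = ∑ a ∈ s, g a b :=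
    finsum_eq_sum_of_support_subset _ fun a ha => (h a b ha).1
  rw [finsum_congr row, finsum_congr col,
    finsum_eq_sum_of_support_subset (s := s), finsum_eq_sum_of_support_subset (s := t),
    Finset.sum_comm]
  · intro b hb
    obtain ⟨a, -, ha⟩ := Finset.exists_ne_zero_of_sum_ne_zero hb
    exact (h a b ha).2
  · intro a ha
    obtain ⟨b, -, hb⟩ := Finset.exists_ne_zero_of_sum_ne_zero ha
    exact (h a b hb).1

theorem _root_.IsJacobi.exists_bound {a : Matrix ℤ ℤ F} (ha : IsJacobi a) :
    ∃ n : ℕ, ∀ i j, a i j ≠ 0 → i - n ≤ j ∧ j ≤ i + n := by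
  obtain ⟨n, hn⟩ := ha
  refine ⟨n, fun i j hij => ?_⟩
  by_contra h
  exact hij (hn i j (lt_abs.mpr (by omega)))

theorem isJacobi_of_bound {a : Matrix ℤ ℤ F} (n : ℕ)
    (h : ∀ i j, a i j ≠ 0 → i - n ≤ j ∧ j ≤ i + n) : IsJacobi a := by
  refine ⟨n, fun i j hij => ?_⟩
  by_contra hne
  have := h i j hne
  rw [lt_abs] at hij
  omega

theorem isJacobi_zero : IsJacobi (0 : Matrix ℤ ℤ F) := ⟨0, fun _ _ _ => rfl⟩

theorem _root_.IsJacobi.add {a b : Matrix ℤ ℤ F} (ha : IsJacobi a) (hb : IsJacobi b) :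
    IsJacobi (a + b) := by
  obtain ⟨n, hn⟩ := ha
  obtain ⟨m, hm⟩ := hb
  refine ⟨n + m, fun i j h => ?_⟩
  rw [Matrix.add_apply, hn i j (by omega), hm i j (by omega), add_zero]

theorem _root_.IsJacobi.smul {a : Matrix ℤ ℤ F} (c : F) (ha : IsJacobi a) : IsJacobi (c • a) := by
  obtain ⟨n, hn⟩ := ha
  exact ⟨n, fun i j h => by rw [Matrix.smul_apply, hn i j h, smul_zero]⟩

theorem _root_.IsJacobi.sub {a b : Matrix ℤ ℤ F} (ha : IsJacobi a) (hb : IsJacobi b) :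
    IsJacobi (a - b) := by
  rw [sub_eq_add_neg, ← neg_one_smul F b]
  exact ha.add (hb.smul _)

theorem isJacobi_sum {ι : Type*} (s : Finset ι) {f : ι → Matrix ℤ ℤ F}
    (hf : ∀ m, IsJacobi (f m)) : IsJacobi (∑ m ∈ s, f m) := by
  classical
  induction s using Finset.induction_on with
  | empty => exact isJacobi_zero
  | insert m s hm ih => rw [Finset.sum_insert hm]; exact (hf m).add ih

theorem _root_.IsJacobi.matMul {a b : Matrix ℤ ℤ F} (ha : IsJacobi a) (hb : IsJacobi b) :
    IsJacobi (matMul a b) := by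
  obtain ⟨n, hn⟩ := ha
  obtain ⟨m, hm⟩ := hb
  refine ⟨n + m, fun i j h => finsum_eq_zero_of_forall_eq_zero fun k => ?_⟩
  have := abs_sub_le i k j
  rcases le_or_gt |i - k| n with hik | hik
  · rw [hm k j (by omega), mul_zero]
  · rw [hn i k hik, zero_mul]

def MatMulFinite (a b : Matrix ℤ ℤ F) : Prop :=
  ∀ i j, HasFiniteSupport fun k => a i k * b k j

theorem _root_.IsJacobi.matMulFinite_left {a : Matrix ℤ ℤ F} (ha : IsJacobi a)
    (b : Matrix ℤ ℤ F) : MatMulFinite a b := by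
  obtain ⟨n, hn⟩ := ha.exists_bound
  refine fun i j => (Set.finite_Icc (i - n) (i + n)).subset fun k hk => hn i k ?_
  exact left_ne_zero_of_mul hk

theorem _root_.IsJacobi.matMulFinite_right {b : Matrix ℤ ℤ F} (hb : IsJacobi b)
    (a : Matrix ℤ ℤ F) : MatMulFinite a b := by
  obtain ⟨n, hn⟩ := hb.exists_bound
  refine fun i j => (Set.finite_Icc (j - n) (j + n)).subset fun k hk => ?_
  have := hn k j (right_ne_zero_of_mul hk)
  constructor <;> omega

theorem matMul_add {a u v : Matrix ℤ ℤ F} (hu : MatMulFinite a u) (hv : MatMulFinite a v) :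
    matMul a (u + v) = matMul a u + matMul a v := by
  ext i j
  simp only [matMul, Matrix.add_apply, mul_add]
  exact finsum_add_distrib (hu i j) (hv i j)

theorem add_matMul {u v b : Matrix ℤ ℤ F} (hu : MatMulFinite u b) (hv : MatMulFinite v b) :
    matMul (u + v) b = matMul u b + matMul v b := by
  ext i j
  simp only [matMul, Matrix.add_apply, add_mul]
  exact finsum_add_distrib (hu i j) (hv i j)

theorem matMul_sub {a u v : Matrix ℤ ℤ F} (hu : MatMulFinite a u) (hv : MatMulFinite a v) :
    matMul a (u - v) = matMul a u - matMul a v := by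
  ext i j
  simp only [matMul, Matrix.sub_apply, mul_sub]
  exact finsum_sub_distrib (hu i j) (hv i j)

theorem sub_matMul {u v b : Matrix ℤ ℤ F} (hu : MatMulFinite u b) (hv : MatMulFinite v b) :
    matMul (u - v) b = matMul u b - matMul v b := by
  ext i j
  simp only [matMul, Matrix.sub_apply, sub_mul]
  exact finsum_sub_distrib (hu i j) (hv i j)

theorem matMul_smul (a u : Matrix ℤ ℤ F) (c : F) : matMul a (c • u) = c • matMul a u := by
  ext i j
  simp only [matMul, Matrix.smul_apply, smul_eq_mul, mul_finsum]
  exact finsum_congr fun k => mul_left_comm _ _ _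

theorem smul_matMul (u b : Matrix ℤ ℤ F) (c : F) : matMul (c • u) b = c • matMul u b := by
  ext i j
  simp only [matMul, Matrix.smul_apply, smul_eq_mul, mul_finsum]
  exact finsum_congr fun k => mul_assoc _ _ _

theorem matMul_zero (a : Matrix ℤ ℤ F) : matMul a 0 = 0 := by
  simpa using matMul_smul a 0 0

theorem zero_matMul (b : Matrix ℤ ℤ F) : matMul 0 b = 0 := by
  simpa using smul_matMul 0 b 0

theorem matMul_assoc_of_support_subset {a b c : Matrix ℤ ℤ F}
    (h : ∀ i j, ∃ s : Finset ℤ, ∀ l k, a i l * b l k * c k j ≠ 0 → l ∈ s ∧ k ∈ s) :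
    matMul (matMul a b) c = matMul a (matMul b c) := by
  ext i j
  obtain ⟨s, hs⟩ := h i j
  simp only [matMul, finsum_mul, mul_finsum, ← mul_assoc]
  exact (finsum_comm_of_support_subset _ s s fun l k hlk => hs l k hlk).symm

theorem matMul_assoc_of_left_middle {a b : Matrix ℤ ℤ F} (ha : IsJacobi a) (hb : IsJacobi b)
    (c : Matrix ℤ ℤ F) : matMul (matMul a b) c = matMul a (matMul b c) := by
  obtain ⟨n, hn⟩ := ha.exists_bound
  obtain ⟨m, hm⟩ := hb.exists_bound
  refine matMul_assoc_of_support_subset fun i j => ⟨Icc (i - n - m) (i + n + m), fun l k h => ?_⟩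
  have hl := hn i l (left_ne_zero_of_mul (left_ne_zero_of_mul h))
  have hk := hm l k (right_ne_zero_of_mul (left_ne_zero_of_mul h))
  simp only [Finset.mem_Icc]
  omega

theorem matMul_assoc_of_middle_right {b c : Matrix ℤ ℤ F} (a : Matrix ℤ ℤ F) (hb : IsJacobi b)
    (hc : IsJacobi c) : matMul (matMul a b) c = matMul a (matMul b c) := by
  obtain ⟨n, hn⟩ := hb.exists_bound
  obtain ⟨m, hm⟩ := hc.exists_bound
  refine matMul_assoc_of_support_subset fun i j => ⟨Icc (j - n - m) (j + n + m), fun l k h => ?_⟩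
  have hl := hn l k (right_ne_zero_of_mul (left_ne_zero_of_mul h))
  have hk := hm k j (right_ne_zero_of_mul h)
  simp only [Finset.mem_Icc]
  omega

theorem matMul_assoc_of_left_right {a c : Matrix ℤ ℤ F} (ha : IsJacobi a) (b : Matrix ℤ ℤ F)
    (hc : IsJacobi c) : matMul (matMul a b) c = matMul a (matMul b c) := by
  obtain ⟨n, hn⟩ := ha.exists_bound
  obtain ⟨m, hm⟩ := hc.exists_bound
  refine matMul_assoc_of_support_subset fun i j =>
    ⟨Icc (i - n) (i + n) ∪ Icc (j - m) (j + m), fun l k h => ?_⟩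
  have hl := hn i l (left_ne_zero_of_mul (left_ne_zero_of_mul h))
  have hk := hm k j (right_ne_zero_of_mul h)
  simp only [Finset.mem_union, Finset.mem_Icc]
  omega

noncomputable def bracket (a b : Matrix ℤ ℤ F) : Matrix ℤ ℤ F := matMul a b - matMul b a

theorem _root_.IsJacobi.bracket {a b : Matrix ℤ ℤ F} (ha : IsJacobi a) (hb : IsJacobi b) :
    IsJacobi (bracket a b) :=
  (ha.matMul hb).sub (hb.matMul ha)

theorem zero_bracket (b : Matrix ℤ ℤ F) : bracket 0 b = 0 := by
  rw [bracket, zero_matMul, matMul_zero, sub_zero]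

theorem bracket_swap (a b : Matrix ℤ ℤ F) : bracket a b = -bracket b a :=
  (neg_sub _ _).symm

theorem bracket_add_left {g : Matrix ℤ ℤ F} (hg : IsJacobi g) (u v : Matrix ℤ ℤ F) :
    bracket (u + v) g = bracket u g + bracket v g := by
  rw [bracket, bracket, bracket, add_matMul (hg.matMulFinite_right u) (hg.matMulFinite_right v),
    matMul_add (hg.matMulFinite_left u) (hg.matMulFinite_left v)]
  abel

theorem bracket_sub_left {g : Matrix ℤ ℤ F} (hg : IsJacobi g) (u v : Matrix ℤ ℤ F) :
    bracket (u - v) g = bracket u g - bracket v g := by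
  rw [bracket, bracket, bracket, sub_matMul (hg.matMulFinite_right u) (hg.matMulFinite_right v),
    matMul_sub (hg.matMulFinite_left u) (hg.matMulFinite_left v)]
  abel

theorem bracket_sub_right {g : Matrix ℤ ℤ F} (hg : IsJacobi g) (u v : Matrix ℤ ℤ F) :
    bracket g (u - v) = bracket g u - bracket g v := by
  rw [bracket_swap, bracket_sub_left hg, bracket_swap u, bracket_swap v]
  abel

theorem single_one_apply (k l i j : ℤ) :
    single k l (1 : F) i j = if i = k ∧ j = l then 1 else 0 := by
  simp only [single_apply, @eq_comm _ k, @eq_comm _ l]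

theorem isJacobi_single (k l : ℤ) : IsJacobi (single k l (1 : F)) := by
  refine isJacobi_of_bound (k - l).natAbs fun i j h => ?_
  rw [single_one_apply] at h
  obtain ⟨rfl, rfl⟩ : i = k ∧ j = l := by by_contra hne; exact h (if_neg hne)
  omega

theorem matMul_single_apply (a : Matrix ℤ ℤ F) (k l i j : ℤ) :
    matMul a (single k l 1) i j = if j = l then a i k else 0 := by
  rw [matMul, finsum_eq_single _ k fun t ht => by simp [single_one_apply, ht]]
  by_cases h : j = l <;> simp [single_one_apply, h]

theorem single_matMul_apply (a : Matrix ℤ ℤ F) (k l i j : ℤ) :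
    matMul (single k l 1) a i j = if i = k then a l j else 0 := by
  rw [matMul, finsum_eq_single _ l fun t ht => by simp [single_one_apply, ht]]
  by_cases h : i = k <;> simp [single_one_apply, h]

theorem bracket_single_apply (a : Matrix ℤ ℤ F) (k l i j : ℤ) :
    bracket a (single k l 1) i j = (if j = l then a i k else 0) - (if i = k then a l j else 0) := by
  rw [bracket, Matrix.sub_apply, matMul_single_apply, single_matMul_apply]

theorem single_bracket_apply (a : Matrix ℤ ℤ F) (k l i j : ℤ) :
    bracket (single k l 1) a i j = (if i = k then a l j else 0) - (if j = l then a i k else 0) := by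
  rw [bracket, Matrix.sub_apply, matMul_single_apply, single_matMul_apply]

theorem bracket_single_single (k l k' l' : ℤ) :
    bracket (single k l (1 : F)) (single k' l' 1) =
      (if l = k' then single k l' 1 else 0) - (if l' = k then single k' l 1 else 0) := by
  ext i j
  rw [single_bracket_apply]
  by_cases hl : l = k' <;> by_cases hl' : l' = k <;> simp [single_one_apply, hl, hl'] <;> grind

theorem single_bracket_single_bracket {i j : ℤ} (hij : i ≠ j) (a : Matrix ℤ ℤ F) :
    bracket (single i j 1) (bracket (single i j 1) a) = (-(2 * a j i)) • single i j 1 := by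
  ext p q
  simp only [single_bracket_apply, Matrix.smul_apply, single_one_apply, smul_eq_mul]
  split_ifs <;> grind

def shiftDiagonal (m : ℤ) (f : ℤ → F) : Matrix ℤ ℤ F := fun i j => if j = i + m then f i else 0

theorem isJacobi_shiftDiagonal (m : ℤ) (f : ℤ → F) : IsJacobi (shiftDiagonal m f) := by
  refine isJacobi_of_bound m.natAbs fun i j h => ?_
  have : j = i + m := by by_contra hj; exact h (if_neg hj)
  omega

theorem shiftDiagonal_matMul_apply (m : ℤ) (f : ℤ → F) (a : Matrix ℤ ℤ F) (i j : ℤ) :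
    matMul (shiftDiagonal m f) a i j = f i * a (i + m) j := by
  rw [matMul, finsum_eq_single _ (i + m) fun t ht => by simp [shiftDiagonal, ht]]
  simp [shiftDiagonal]

theorem matMul_shiftDiagonal_apply (a : Matrix ℤ ℤ F) (m : ℤ) (f : ℤ → F) (i j : ℤ) :
    matMul a (shiftDiagonal m f) i j = a i (j - m) * f (j - m) := by
  rw [matMul, finsum_eq_single _ (j - m) fun t ht => by
    simp [shiftDiagonal, show j ≠ t + m by omega]]
  simp [shiftDiagonal]

theorem bracket_shiftDiagonal_shiftDiagonal (m m' : ℤ) (f g : ℤ → F) :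
    bracket (shiftDiagonal m f) (shiftDiagonal m' g) =
      shiftDiagonal (m + m') fun i => f i * g (i + m) - g i * f (i + m') := by
  ext i j
  rw [bracket, Matrix.sub_apply, shiftDiagonal_matMul_apply, shiftDiagonal_matMul_apply]
  simp only [shiftDiagonal]
  by_cases h : j = i + (m + m')
  · rw [if_pos (by omega), if_pos (by omega), if_pos h]
  · rw [if_neg (by omega), if_neg (by omega), if_neg h]
    ring

theorem bracket_shiftDiagonal_zero_single (μ : ℤ → F) (k l : ℤ) :
    bracket (shiftDiagonal 0 μ) (single k l 1) = (μ k - μ l) • single k l 1 := by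
  ext i j
  rw [bracket_single_apply]
  simp only [shiftDiagonal, single_one_apply, Matrix.smul_apply, smul_eq_mul]
  split_ifs <;> grind

theorem shiftDiagonal_const_bracket (c : F) (b : Matrix ℤ ℤ F) :
    bracket (shiftDiagonal 0 fun _ => c) b = 0 := by
  ext i j
  rw [bracket, Matrix.sub_apply, shiftDiagonal_matMul_apply, matMul_shiftDiagonal_apply]
  simp [mul_comm]

theorem exists_sub_pred_eq (g : ℤ → F) : ∃ s : ℤ → F, ∀ i, s i - s (i - 1) = g i := by
  refine ⟨fun i => ∑ k ∈ Ioc 0 i, g k - ∑ k ∈ Ioc i 0, g k, fun i => ?_⟩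
  dsimp only
  rcases lt_or_ge 0 i with hi | hi
  · have h : Ioc 0 i = insert i (Ioc 0 (i - 1)) := by ext; simp only [mem_Ioc, mem_insert]; omega
    rw [h, sum_insert (by simp), Ioc_eq_empty_of_le hi.le,
      Ioc_eq_empty_of_le (show (0 : ℤ) ≤ i - 1 by omega)]
    simp
  · have h : Ioc (i - 1) 0 = insert i (Ioc i 0) := by ext; simp only [mem_Ioc, mem_insert]; omega
    rw [h, sum_insert (by simp), Ioc_eq_empty_of_le hi,
      Ioc_eq_empty_of_le (show i - 1 ≤ 0 by omega)]
    simp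

theorem exists_bracket_eq_shiftDiagonal (m : ℤ) (g : ℤ → F) :
    ∃ u v, IsJacobi u ∧ IsJacobi v ∧ bracket u v = shiftDiagonal m g := by
  rcases eq_or_ne m 0 with rfl | hm
  · obtain ⟨s, hs⟩ := exists_sub_pred_eq g
    refine ⟨shiftDiagonal 1 s, shiftDiagonal (-1) fun _ => 1, isJacobi_shiftDiagonal _ _,
      isJacobi_shiftDiagonal _ _, ?_⟩
    rw [bracket_shiftDiagonal_shiftDiagonal]
    simp [← sub_eq_add_neg, hs]
  · refine ⟨shiftDiagonal m g, shiftDiagonal 0 fun i => ((i / m : ℤ) : F),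
      isJacobi_shiftDiagonal _ _, isJacobi_shiftDiagonal _ _, ?_⟩
    rw [bracket_shiftDiagonal_shiftDiagonal, add_zero]
    congr 1
    funext i
    rw [show (i + m) / m = i / m + 1 by simpa using Int.add_mul_ediv_right i 1 hm, add_zero]
    push_cast
    ring

theorem _root_.IsJacobi.eq_sum_shiftDiagonal {a : Matrix ℤ ℤ F} (ha : IsJacobi a) :
    ∃ n : ℕ, a = ∑ m ∈ Icc (-(n : ℤ)) n, shiftDiagonal m fun i => a i (i + m) := by
  obtain ⟨n, hn⟩ := ha.exists_bound
  refine ⟨n, ?_⟩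
  ext i j
  simp only [Matrix.sum_apply, shiftDiagonal]
  rw [sum_eq_single (j - i) (fun m _ hm => if_neg (by omega)), if_pos (by omega),
    add_sub_cancel]
  intro hji
  rw [if_pos (by omega), add_sub_cancel]
  by_contra hij
  have := hn i j hij
  simp only [mem_Icc] at hji
  omega

/-- Values need not be Jacobi matrices, so that `D - bracket y` qualifies for every matrix `y`. -/
structure IsLieDerivation (D : Matrix ℤ ℤ F → Matrix ℤ ℤ F) : Prop where
  map_add : ∀ a b, IsJacobi a → IsJacobi b → D (a + b) = D a + D b
  map_smul : ∀ (c : F) a, IsJacobi a → D (c • a) = c • D a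
  leibniz : ∀ a b, IsJacobi a → IsJacobi b → D (bracket a b) = bracket (D a) b + bracket a (D b)

theorem isLieDerivation_bracket (y : Matrix ℤ ℤ F) : IsLieDerivation (bracket y) where
  map_add a b ha hb := by
    rw [bracket, bracket, bracket, matMul_add (ha.matMulFinite_right y) (hb.matMulFinite_right y),
      add_matMul (ha.matMulFinite_left y) (hb.matMulFinite_left y)]
    abel
  map_smul c a _ := by rw [bracket, bracket, matMul_smul, smul_matMul, smul_sub]
  leibniz a b ha hb := by
    have hab := ha.matMul hb
    have hba := hb.matMul ha
    simp only [bracket]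
    rw [matMul_sub (hab.matMulFinite_right y) (hba.matMulFinite_right y),
      sub_matMul (hab.matMulFinite_left y) (hba.matMulFinite_left y),
      sub_matMul (hb.matMulFinite_right _) (hb.matMulFinite_right _),
      matMul_sub (hb.matMulFinite_left _) (hb.matMulFinite_left _),
      matMul_sub (ha.matMulFinite_left _) (ha.matMulFinite_left _),
      sub_matMul (ha.matMulFinite_right _) (ha.matMulFinite_right _),
      ← matMul_assoc_of_middle_right y ha hb, ← matMul_assoc_of_middle_right y hb ha,
      matMul_assoc_of_left_middle ha hb, matMul_assoc_of_left_middle hb ha,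
      matMul_assoc_of_left_right ha y hb, matMul_assoc_of_left_right hb y ha]
    abel

namespace IsLieDerivation

variable {D D' : Matrix ℤ ℤ F → Matrix ℤ ℤ F}

theorem map_zero (hD : IsLieDerivation D) : D 0 = 0 := by
  simpa using hD.map_smul 0 0 isJacobi_zero

theorem map_sum (hD : IsLieDerivation D) {ι : Type*} (s : Finset ι) {f : ι → Matrix ℤ ℤ F}
    (hf : ∀ m, IsJacobi (f m)) : D (∑ m ∈ s, f m) = ∑ m ∈ s, D (f m) := by
  classical
  induction s using Finset.induction_on with
  | empty => simpa using hD.map_zero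
  | insert m s hm ih =>
    rw [Finset.sum_insert hm, Finset.sum_insert hm, hD.map_add _ _ (hf m) (isJacobi_sum s hf), ih]

theorem sub (hD : IsLieDerivation D) (hD' : IsLieDerivation D') : IsLieDerivation (D - D') where
  map_add a b ha hb := by
    simp only [Pi.sub_apply, hD.map_add a b ha hb, hD'.map_add a b ha hb]
    abel
  map_smul c a ha := by simp only [Pi.sub_apply, hD.map_smul c a ha, hD'.map_smul c a ha, smul_sub]
  leibniz a b ha hb := by
    simp only [Pi.sub_apply, hD.leibniz a b ha hb, hD'.leibniz a b ha hb, bracket_sub_left hb,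
      bracket_sub_right ha]
    abel

theorem map_sub (hD : IsLieDerivation D) {a b : Matrix ℤ ℤ F} (ha : IsJacobi a) (hb : IsJacobi b) :
    D (a - b) = D a - D b := by
  rw [sub_eq_add_neg, ← neg_one_smul F b, hD.map_add _ _ ha (hb.smul _), hD.map_smul _ _ hb,
    neg_one_smul, sub_eq_add_neg]

theorem eq_zero_of_apply_bracket (hD : IsLieDerivation D)
    (h : ∀ u v, IsJacobi u → IsJacobi v → D (bracket u v) = 0) {a : Matrix ℤ ℤ F}
    (ha : IsJacobi a) : D a = 0 := by
  obtain ⟨n, hn⟩ := ha.eq_sum_shiftDiagonal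
  rw [hn, hD.map_sum _ fun m => isJacobi_shiftDiagonal _ _]
  refine sum_eq_zero fun m _ => ?_
  obtain ⟨u, v, hu, hv, huv⟩ := exists_bracket_eq_shiftDiagonal m fun i => a i (i + m)
  rw [← huv, h u v hu hv]

theorem apply_apply_eq_zero_of_ne (hD : IsLieDerivation D) (two : (2 : F) ≠ 0)
    (hD0 : ∀ k l, k ≠ l → D (single k l 1) = 0) {a : Matrix ℤ ℤ F} (ha : IsJacobi a) {i j : ℤ}
    (hij : i ≠ j) : D a i j = 0 := by
  have hE := isJacobi_single (F := F) j i
  have key := hD.leibniz _ _ hE (hE.bracket ha)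
  rw [hD.leibniz _ _ hE ha, hD0 j i hij.symm, zero_bracket, zero_bracket, zero_add, zero_add,
    single_bracket_single_bracket hij.symm, single_bracket_single_bracket hij.symm,
    hD.map_smul _ _ hE, hD0 j i hij.symm, smul_zero] at key
  simpa [two] using congr_fun₂ key j i

theorem apply_apply_self_eq (hD : IsLieDerivation D) (two : (2 : F) ≠ 0)
    (hD0 : ∀ k l, k ≠ l → D (single k l 1) = 0) {a : Matrix ℤ ℤ F} (ha : IsJacobi a) (i j : ℤ) :
    D a i i = D a j j := by
  rcases eq_or_ne i j with rfl | hij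
  · rfl
  have h := congr_fun₂ (hD.leibniz _ _ (isJacobi_single i j) ha) i j
  rw [hD.apply_apply_eq_zero_of_ne two hD0 ((isJacobi_single i j).bracket ha) hij, hD0 i j hij,
    zero_bracket, zero_add, single_bracket_apply] at h
  simp only [if_true] at h
  exact (sub_eq_zero.mp h.symm).symm

theorem apply_eq_shiftDiagonal_const (hD : IsLieDerivation D) (two : (2 : F) ≠ 0)
    (hD0 : ∀ k l, k ≠ l → D (single k l 1) = 0) {a : Matrix ℤ ℤ F} (ha : IsJacobi a) :
    D a = shiftDiagonal 0 fun _ => D a 0 0 := by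
  ext i j
  simp only [shiftDiagonal, add_zero]
  split_ifs with h
  · rw [h]
    exact hD.apply_apply_self_eq two hD0 ha i 0
  · exact hD.apply_apply_eq_zero_of_ne two hD0 ha (Ne.symm h)

theorem eq_zero_of_apply_single (hD : IsLieDerivation D) (two : (2 : F) ≠ 0)
    (hD0 : ∀ k l, k ≠ l → D (single k l 1) = 0) {a : Matrix ℤ ℤ F} (ha : IsJacobi a) :
    D a = 0 := by
  refine hD.eq_zero_of_apply_bracket (fun u v hu hv => ?_) ha
  rw [hD.leibniz u v hu hv, hD.apply_eq_shiftDiagonal_const two hD0 hu,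
    hD.apply_eq_shiftDiagonal_const two hD0 hv, bracket_swap u, shiftDiagonal_const_bracket,
    shiftDiagonal_const_bracket, neg_zero, add_zero]

theorem apply_bracket_single_single_apply (hD : IsLieDerivation D) (k l k' l' i j : ℤ) :
    D (bracket (single k l 1) (single k' l' 1)) i j =
      (if j = l' then D (single k l 1) i k' else 0) - (if i = k' then D (single k l 1) l' j else 0) +
        ((if i = k then D (single k' l' 1) l j else 0) -
          (if j = l then D (single k' l' 1) i k else 0)) := by
  rw [hD.leibniz _ _ (isJacobi_single k l) (isJacobi_single k' l'), Matrix.add_apply,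
    bracket_single_apply, single_bracket_apply]

theorem apply_single_self_apply_eq_zero (hD : IsLieDerivation D) {i k l : ℤ} (hil : i ≠ l)
    (hki : k ≠ i) (hkl : k ≠ l) : D (single i i 1) k l = 0 := by
  have h := hD.apply_bracket_single_single_apply i i l l k l
  simp only [bracket_single_single, hil, hil.symm, hki, hkl, ↓reduceIte, sub_self, hD.map_zero,
    Matrix.zero_apply, sub_zero, add_zero] at h
  exact h.symm

theorem apply_single_self_add_apply_single_self (hD : IsLieDerivation D) {i l : ℤ} (hil : i ≠ l) :
    D (single i i 1) i l + D (single l l 1) i l = 0 := by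
  have h := hD.apply_bracket_single_single_apply i i l l i l
  simp only [bracket_single_single, hil, hil.symm, ↓reduceIte, sub_self, hD.map_zero,
    Matrix.zero_apply, sub_zero] at h
  exact h.symm

theorem exists_isDiag_sub_bracket (hD : IsLieDerivation D) :
    ∃ y : Matrix ℤ ℤ F, ∀ i, (D (single i i 1) - bracket y (single i i 1)).IsDiag := by
  refine ⟨of fun p i => if p = i then 0 else D (single i i 1) p i, fun i p q hpq => ?_⟩
  dsimp only
  rw [Matrix.sub_apply, bracket_single_apply, sub_eq_zero]
  by_cases hq : q = i
  · subst hq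
    simp [hpq]
  by_cases hp : p = i
  · subst hp
    simp [hpq, eq_neg_iff_add_eq_zero, hD.apply_single_self_add_apply_single_self hpq]
  · simp [hp, hq, hD.apply_single_self_apply_eq_zero (Ne.symm hq) hp hpq]

theorem apply_single_apply_eq_zero (hD : IsLieDerivation D) (two : (2 : F) ≠ 0)
    (hdiag : ∀ i, (D (single i i 1)).IsDiag) {k l : ℤ} (hkl : k ≠ l) {p q : ℤ}
    (hpq : ¬(p = k ∧ q = l)) : D (single k l 1) p q = 0 := by
  have hE : bracket (single k k (1 : F)) (single k l 1) = single k l 1 := by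
    simp [bracket_single_single, hkl.symm]
  have hk (p q : ℤ) := hD.apply_bracket_single_single_apply k k k l p q
  simp only [hE] at hk
  by_cases hpk : p = k
  · rw [hpk] at hpq ⊢
    by_cases hqk : q = k
    · have h := hk k k
      simp only [hkl, ↓reduceIte, zero_sub, sub_self, add_zero] at h
      rw [hqk, h, hdiag k hkl.symm, neg_zero]
    · have hql : q ≠ l := fun h => hpq ⟨rfl, h⟩
      have h := hD.apply_bracket_single_single_apply q q k l k q
      simp only [bracket_single_single, hqk, Ne.symm hqk, hql, hql.symm, ↓reduceIte, sub_self,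
        hD.map_zero, Matrix.zero_apply, zero_sub] at h
      linear_combination h - hdiag q hql.symm
  · by_cases hqk : q = k
    · have h := hk p k
      simp only [hkl, hpk, ↓reduceIte, sub_self, zero_sub, zero_add] at h
      rw [hqk]
      exact (mul_eq_zero.mp (by linear_combination h : (2 : F) * _ = 0)).resolve_left two
    · have h := hk p q
      simp only [hdiag k hpk, ite_self, hpk, hqk, ↓reduceIte, sub_self, add_zero] at h
      exact h

theorem apply_single_eq_smul (hD : IsLieDerivation D) (two : (2 : F) ≠ 0)
    (hdiag : ∀ i, (D (single i i 1)).IsDiag) {k l : ℤ} (hkl : k ≠ l) :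
    D (single k l 1) = D (single k l 1) k l • single k l 1 := by
  ext p q
  rw [Matrix.smul_apply, single_one_apply, smul_eq_mul]
  split_ifs with h
  · rw [h.1, h.2, mul_one]
  · rw [mul_zero]
    exact hD.apply_single_apply_eq_zero two hdiag hkl h

theorem apply_single_apply_add_apply_single_apply (hD : IsLieDerivation D) (two : (2 : F) ≠ 0)
    {k l : ℤ} (hkl : k ≠ l) : D (single k l 1) k l + D (single l k 1) l k = 0 := by
  have hk := hD.apply_bracket_single_single_apply k k k l k l
  have hl := hD.apply_bracket_single_single_apply l l l k l k
  have hkk := hD.apply_bracket_single_single_apply k l l k k k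
  have hll := hD.apply_bracket_single_single_apply k l l k l l
  simp only [bracket_single_single, hkl, hkl.symm, ↓reduceIte, sub_zero, zero_sub, right_eq_add,
    hD.map_sub (isJacobi_single k k) (isJacobi_single l l), Matrix.sub_apply] at hk hl hkk hll
  have h2 : (2 : F) * (D (single k l 1) k l + D (single l k 1) l k) = 0 := by
    linear_combination hll - hkk + hk + hl
  exact (mul_eq_zero.mp h2).resolve_left two

theorem apply_single_apply_eq_add (hD : IsLieDerivation D) {k l m : ℤ} (hkl : k ≠ l)
    (hkm : k ≠ m) (hml : m ≠ l) :
    D (single k l 1) k l = D (single k m 1) k m + D (single m l 1) m l := by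
  have h := hD.apply_bracket_single_single_apply k m m l k l
  simpa only [bracket_single_single, hkl.symm, hkm, hml.symm, ↓reduceIte, sub_zero] using h

theorem exists_apply_single_eq_bracket_shiftDiagonal (hD : IsLieDerivation D)
    (two : (2 : F) ≠ 0) (hdiag : ∀ i, (D (single i i 1)).IsDiag) :
    ∃ μ : ℤ → F, ∀ k l, k ≠ l →
      D (single k l 1) = bracket (shiftDiagonal 0 μ) (single k l 1) := by
  refine ⟨fun k => if k = 0 then 0 else D (single k 0 1) k 0, fun k l hkl => ?_⟩
  rw [bracket_shiftDiagonal_zero_single, hD.apply_single_eq_smul two hdiag hkl]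
  congr 1
  rcases eq_or_ne k 0 with rfl | hk
  · simp only [if_true, if_neg hkl.symm, zero_sub]
    exact eq_neg_of_add_eq_zero_left (hD.apply_single_apply_add_apply_single_apply two hkl)
  rcases eq_or_ne l 0 with rfl | hl
  · simp [hk]
  · simp only [if_neg hk, if_neg hl]
    linear_combination hD.apply_single_apply_eq_add hkl hk hl.symm +
      hD.apply_single_apply_add_apply_single_apply two hl.symm

theorem exists_apply_single_eq_bracket (hD : IsLieDerivation D) (two : (2 : F) ≠ 0) :
    ∃ y : Matrix ℤ ℤ F, ∀ k l, k ≠ l → D (single k l 1) = bracket y (single k l 1) := by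
  obtain ⟨y, hy⟩ := hD.exists_isDiag_sub_bracket
  obtain ⟨μ, hμ⟩ := (hD.sub (isLieDerivation_bracket y)).exists_apply_single_eq_bracket_shiftDiagonal
    two hy
  refine ⟨y + shiftDiagonal 0 μ, fun k l hkl => ?_⟩
  rw [bracket_add_left (isJacobi_single k l), ← hμ k l hkl, Pi.sub_apply, add_sub_cancel]

end IsLieDerivation

theorem isJacobi_of_isJacobi_bracket {y : Matrix ℤ ℤ F}
    (hS : IsJacobi (bracket y (shiftDiagonal 1 fun _ => 1)))
    (hP : IsJacobi (bracket y (shiftDiagonal 0 fun i => if 0 ≤ i then 1 else 0))) :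
    IsJacobi y := by
  obtain ⟨n, hn⟩ := hS.exists_bound
  obtain ⟨m, hm⟩ := hP.exists_bound
  refine isJacobi_of_bound (n + m + 1) fun i j hij => ?_
  by_contra hfar
  -- `[y, S]` vanishes far from the diagonal, so `y` is constant along each far diagonal; moving
  -- along it to where it crosses the boundary of `P`, `[y, P]` picks up the entry `± y i j`.
  have hper : Periodic (fun t => y (i + t) (j + t)) 1 := by
    intro t
    by_contra hne
    have h := hn (i + t) (j + t + 1)
    simp only [bracket, Matrix.sub_apply, matMul_shiftDiagonal_apply, shiftDiagonal_matMul_apply,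
      add_sub_cancel_right, mul_one, one_mul] at h
    have := h (sub_ne_zero.mpr fun h' => hne (by simpa only [add_assoc] using h'.symm))
    omega
  set t := -max i j
  have hconst : y (i + t) (j + t) = y i j := by simpa using hper.int_mul t 0
  have hP : (if 0 ≤ j + t then (1 : F) else 0) - (if 0 ≤ i + t then 1 else 0) ≠ 0 := by
    split_ifs <;> first | omega | norm_num
  have := hm (i + t) (j + t) (by
    simp only [bracket, Matrix.sub_apply, matMul_shiftDiagonal_apply, shiftDiagonal_matMul_apply,
      sub_zero, add_zero, hconst, mul_comm (y i j), ← sub_mul]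
    exact mul_ne_zero hP hij)
  omega

end JacobiMatrix

open JacobiMatrix

/-- For `char F ≠ 2`, every derivation of the Lie algebra `gl_J(F)` of
Jacobi matrices is inner: there is a Jacobi matrix `y` with `d(a) = y*a - a*y` for
all Jacobi matrices `a`. -/
theorem stmt_13 (F : Type*) [Field F] (hchar : ringChar F ≠ 2)
    (d : Matrix ℤ ℤ F → Matrix ℤ ℤ F)
    (hmap : ∀ a, IsJacobi a → IsJacobi (d a))
    (hadd : ∀ a b, IsJacobi a → IsJacobi b → d (a + b) = d a + d b)
    (hsmul : ∀ (c : F) (a), IsJacobi a → d (c • a) = c • d a)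
    (hbracket : ∀ a b, IsJacobi a → IsJacobi b →
      d (matMul a b - matMul b a) =
        (matMul (d a) b - matMul b (d a)) + (matMul a (d b) - matMul (d b) a)) :
    ∃ y : Matrix ℤ ℤ F, IsJacobi y ∧
      ∀ a, IsJacobi a → d a = matMul y a - matMul a y := by
  have two : (2 : F) ≠ 0 := Ring.two_ne_zero hchar
  have hd : IsLieDerivation d := ⟨hadd, hsmul, hbracket⟩
  obtain ⟨y, hy⟩ := hd.exists_apply_single_eq_bracket two
  have hdy (a : Matrix ℤ ℤ F) (ha : IsJacobi a) : d a = bracket y a :=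
    sub_eq_zero.mp <| (hd.sub (isLieDerivation_bracket y)).eq_zero_of_apply_single two
      (fun k l hkl => sub_eq_zero.mpr (hy k l hkl)) ha
  refine ⟨y, isJacobi_of_isJacobi_bracket ?_ ?_, hdy⟩ <;>
    exact hdy _ (isJacobi_shiftDiagonal _ _) ▸ hmap _ (isJacobi_shiftDiagonal _ _)
end
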